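/- One-step characterization of the Next modality (correctness of the Pre computation): Let M be an RB-CGS#, A a nonempty coalition, b a resource bound, s a state, and φ a formula of RB±ATL#. Then M, s ⊨ ⟨⟨A^b⟩⟩○φ if and only if there exists a joint action σ_A ∈ D_A(s) such that cons(s, (σ_A)_a) ≤ b_a componentwise for every a ∈ A, out(s, σ_A) is nonempty, and M, s' ⊨ φ for every s' ∈ out(s, σ_A). -/

import Mathlib

/-- A resource-bounded concurrent game structure with a diminishing resource (RB-CGS#). -/
structure RBCGS (Agt S Act Res : Type) where
  /-- available actions for each agent in each state -/
  d : S → Agt → Set Act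
  d_ne : ∀ s a, (d s a).Nonempty
  /-- cost function (negative = consumption, positive = production) -/
  cost : S → Act → Res → ℤ
  /-- the distinguished diminishing resource (the "first" resource) -/
  res1 : Res
  /-- every available action consumes at least one unit of the diminishing resource -/
  cost_first : ∀ s (a : Agt) (α : Act), α ∈ d s a → cost s α res1 ≤ -1
  /-- partial transition function on joint actions -/
  tr : S → (Agt → Act) → Option S

namespace RBCGS

variable {Agt S Act Res : Type}

/-- consumption of resource ρ by action α at state s : `|min(0, c(s,α))|`. -/
def consR (M : RBCGS Agt S Act Res) (s : S) (α : Act) (ρ : Res) : ℕ :=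
  (min 0 (M.cost s α ρ)).natAbs

/-- production of resource ρ by action α at state s : `max(0, c(s,α))`. -/
def prodR (M : RBCGS Agt S Act Res) (s : S) (α : Act) (ρ : Res) : ℕ :=
  (max 0 (M.cost s α ρ)).toNat

/-- σ is a (projection of a) joint action for coalition A at state s. -/
def JointAt (M : RBCGS Agt S Act Res) (A : Set Agt) (s : S) (σ : Agt → Act) : Prop :=
  ∀ a ∈ A, σ a ∈ M.d s a

/-- outcomes of a joint action of coalition A at state s. -/
def outA (M : RBCGS Agt S Act Res) (A : Set Agt) (s : S) (σA : Agt → Act) : Set S :=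
  { s' | ∃ σ : Agt → Act, (∀ a, σ a ∈ M.d s a) ∧ (∀ a ∈ A, σ a = σA a) ∧
    M.tr s σ = some s' }

variable [Inhabited S]

/-- F is a strategy for coalition A : on every nonempty history it prescribes a joint
action available to A at the last state of the history. -/
def Strategy (M : RBCGS Agt S Act Res) (A : Set Agt) (F : List S → Agt → Act) : Prop :=
  ∀ l : List S, l ≠ [] → M.JointAt A (l.getD (l.length - 1) default) (F l)

/-- l is a (finite, nonempty) computation starting at s consistent with strategy F
(the computation `λ[1..k]` is represented 0-based as `l[0..k-1]`). -/
def ConsistentFrom (M : RBCGS Agt S Act Res) (A : Set Agt) (F : List S → Agt → Act)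
    (s : S) (l : List S) : Prop :=
  l ≠ [] ∧ l.getD 0 default = s ∧
    ∀ i, i + 1 < l.length →
      l.getD (i + 1) default ∈ M.outA A (l.getD i default) (F (l.take (i + 1)))

/-- `eAvail M F b l i a ρ` is the amount `e_a(λ[i+1])` of resource ρ available to a
after i steps of l under strategy F with initial bound b. -/
def eAvail (M : RBCGS Agt S Act Res) (F : List S → Agt → Act)
    (b : Agt → Res → ℕ) (l : List S) : ℕ → Agt → Res → ℤ
  | 0 => fun a ρ => (b a ρ : ℤ)
  | i + 1 => fun a ρ =>
      eAvail M F b l i a ρ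
        - (M.consR (l.getD i default) (F (l.take (i + 1)) a) ρ : ℤ)
        + (M.prodR (l.getD i default) (F (l.take (i + 1)) a) ρ : ℤ)

/-- l is b-consistent with strategy F for coalition A. -/
def BConsistent (M : RBCGS Agt S Act Res) (A : Set Agt) (F : List S → Agt → Act)
    (b : Agt → Res → ℕ) (l : List S) : Prop :=
  ∀ a ∈ A, ∀ i, i + 1 < l.length → ∀ ρ,
    (M.consR (l.getD i default) (F (l.take (i + 1)) a) ρ : ℤ) ≤ M.eAvail F b l i a ρ

/-- l is a b-maximal computation from s consistent with F. -/
def BMaximal (M : RBCGS Agt S Act Res) (A : Set Agt) (F : List S → Agt → Act)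
    (b : Agt → Res → ℕ) (s : S) (l : List S) : Prop :=
  M.ConsistentFrom A F s l ∧ M.BConsistent A F b l ∧
    ¬ ∃ l' : List S, l <+: l' ∧ l.length < l'.length ∧
        M.ConsistentFrom A F s l' ∧ M.BConsistent A F b l'

/-- `out(s, F_A, b)` : the set of b-maximal computations from s consistent with F. -/
def outSet (M : RBCGS Agt S Act Res) (A : Set Agt) (F : List S → Agt → Act)
    (b : Agt → Res → ℕ) (s : S) : Set (List S) :=
  { l | M.BMaximal A F b s l }

end RBCGS

/-- Formulas of RB±ATL#. -/
inductive RBForm (Agt Res P : Type) : Type 1 where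
  | prop : P → RBForm Agt Res P
  | neg : RBForm Agt Res P → RBForm Agt Res P
  | or : RBForm Agt Res P → RBForm Agt Res P → RBForm Agt Res P
  | nxt : Set Agt → (Agt → Res → ℕ) → RBForm Agt Res P → RBForm Agt Res P
  | untl : Set Agt → (Agt → Res → ℕ) → RBForm Agt Res P → RBForm Agt Res P → RBForm Agt Res P
  | rls : Set Agt → (Agt → Res → ℕ) → RBForm Agt Res P → RBForm Agt Res P → RBForm Agt Res P

namespace RBCGS

variable {Agt S Act Res P : Type} [Inhabited S]

/-- Truth of an RB±ATL# formula at a state of an RB-CGS#, given a valuation V. -/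
def Sat (M : RBCGS Agt S Act Res) (V : P → S → Prop) :
    RBForm Agt Res P → S → Prop
  | .prop p, s => V p s
  | .neg φ, s => ¬ Sat M V φ s
  | .or φ ψ, s => Sat M V φ s ∨ Sat M V ψ s
  | .nxt A b φ, s => ∃ F, M.Strategy A F ∧
      ∀ l ∈ M.outSet A F b s, 2 ≤ l.length ∧ Sat M V φ (l.getD 1 default)
  | .untl A b φ ψ, s => ∃ F, M.Strategy A F ∧
      ∀ l ∈ M.outSet A F b s, ∃ i < l.length,
        Sat M V ψ (l.getD i default) ∧ ∀ j < i, Sat M V φ (l.getD j default)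
  | .rls A b φ ψ, s => ∃ F, M.Strategy A F ∧
      ∀ l ∈ M.outSet A F b s,
        (∃ i < l.length, Sat M V φ (l.getD i default) ∧
          ∀ j ≤ i, Sat M V ψ (l.getD j default)) ∨
        (∀ j < l.length, Sat M V ψ (l.getD j default))

end RBCGS

/-- All coalitions occurring in the formula are nonempty. -/
def RBForm.goodCoal {Agt Res P : Type} : RBForm Agt Res P → Prop
  | .prop _ => True
  | .neg φ => φ.goodCoal
  | .or φ ψ => φ.goodCoal ∧ ψ.goodCoal
  | .nxt A _ φ => A.Nonempty ∧ φ.goodCoal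
  | .untl A _ φ ψ => A.Nonempty ∧ φ.goodCoal ∧ ψ.goodCoal
  | .rls A _ φ ψ => A.Nonempty ∧ φ.goodCoal ∧ ψ.goodCoal

/-!
Only the first move `F [s]` of a strategy matters. The one-state computation `[s]` is b-maximal
exactly when that move is unaffordable or has no outcome, which rules out `⟨⟨A^b⟩⟩○φ`. Otherwise
every outcome `s'` of the move gives the b-consistent computation `[s, s']`, and it extends to a
b-maximal one: every action consumes the diminishing resource, so for any `a ∈ A` the b-consistent
computations have length at most `b_a(res1) + 1`. Conversely, a joint action `σA` becomes a
strategy by playing it on `[s]` and any available action elsewhere.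
-/

namespace RBCGS

variable {Agt S Act Res : Type} (M : RBCGS Agt S Act Res)

theorem one_le_consR_res1 {s : S} {a : Agt} {α : Act} (h : α ∈ M.d s a) :
    1 ≤ M.consR s α M.res1 := by
  have := M.cost_first s a α h
  unfold consR
  omega

theorem prodR_res1_eq_zero {s : S} {a : Agt} {α : Act} (h : α ∈ M.d s a) :
    M.prodR s α M.res1 = 0 := by
  have := M.cost_first s a α h
  unfold prodR
  omega

variable {M} [Inhabited S] {A : Set Agt} {F : List S → Agt → Act} {b : Agt → Res → ℕ}
  {s : S} {l : List S}

theorem Strategy.mem_d (hF : M.Strategy A F) {i : ℕ} (hi : i < l.length) {a : Agt}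
    (ha : a ∈ A) : F (l.take (i + 1)) a ∈ M.d (l.getD i default) a := by
  have hlen : (l.take (i + 1)).length = i + 1 := by rw [List.length_take]; omega
  have := hF (l.take (i + 1)) (by rw [← List.length_pos_iff, hlen]; omega) a ha
  rwa [hlen, Nat.add_sub_cancel, List.getD_eq_getElem?_getD, List.getElem?_take_of_lt
    (Nat.lt_succ_self i), ← List.getD_eq_getElem?_getD] at this

theorem exists_strategy_singleton {σA : Agt → Act} (hσA : M.JointAt A s σA) :
    ∃ F, M.Strategy A F ∧ F [s] = σA := by
  classical
  refine ⟨fun l => if l = [s] then σA else fun a => (M.d_ne (l.getD (l.length - 1) default) a).some,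
    ?_, if_pos rfl⟩
  intro l _ a ha
  dsimp only
  split_ifs with hl
  · subst hl; exact hσA a ha
  · exact (M.d_ne _ a).some_mem

theorem eAvail_res1_le (hF : M.Strategy A F) {a : Agt} (ha : a ∈ A) :
    ∀ i ≤ l.length, M.eAvail F b l i a M.res1 ≤ b a M.res1 - i
  | 0, _ => by simp [eAvail]
  | i + 1, hi => by
    have hd := hF.mem_d (by omega : i < l.length) ha
    have := eAvail_res1_le hF ha i (by omega)
    have := M.one_le_consR_res1 hd
    simp only [eAvail, M.prodR_res1_eq_zero hd]
    push_cast
    omega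

theorem BConsistent.length_le (hF : M.Strategy A F) {a : Agt} (ha : a ∈ A)
    (hl : M.BConsistent A F b l) : l.length ≤ b a M.res1 + 1 := by
  by_contra! hlong
  have hi : l.length - 2 + 1 < l.length := by omega
  have := hl a ha _ hi M.res1
  have := eAvail_res1_le (l := l) (b := b) hF ha (l.length - 2) (by omega)
  have := M.one_le_consR_res1 (hF.mem_d (Nat.lt_of_succ_lt hi) ha)
  omega

theorem eAvail_append (t : List S) :
    ∀ i ≤ l.length, M.eAvail F b (l ++ t) i = M.eAvail F b l i
  | 0, _ => rfl
  | i + 1, hi => by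
    funext a ρ
    simp only [eAvail, eAvail_append t i (by omega), List.getD_append l t default i (by omega),
      List.take_append_of_le_length hi]

theorem ConsistentFrom.exists_eq_cons (hl : M.ConsistentFrom A F s l) : ∃ t, l = s :: t := by
  obtain ⟨hne, h0, -⟩ := hl
  cases l with
  | nil => exact absurd rfl hne
  | cons x t => exact ⟨t, by simpa using h0⟩

theorem ConsistentFrom.of_prefix {l' : List S} (hl' : M.ConsistentFrom A F s l')
    (hpre : l <+: l') (hl : l ≠ []) : M.ConsistentFrom A F s l := by
  obtain ⟨t, rfl⟩ := hpre
  obtain ⟨-, h0, hstep⟩ := hl'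
  have hpos := List.length_pos_iff.2 hl
  refine ⟨hl, by rwa [List.getD_append _ _ _ _ hpos] at h0, fun i hi => ?_⟩
  have := hstep i (by simp; omega)
  rwa [List.getD_append _ _ _ _ hi, List.getD_append _ _ _ _ (by omega),
    List.take_append_of_le_length hi.le] at this

theorem BConsistent.of_prefix {l' : List S} (hl' : M.BConsistent A F b l') (hpre : l <+: l') :
    M.BConsistent A F b l := by
  obtain ⟨t, rfl⟩ := hpre
  intro a ha i hi ρ
  have := hl' a ha i (by simp; omega) ρ
  rwa [List.getD_append _ _ _ _ (by omega), List.take_append_of_le_length hi.le,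
    eAvail_append t i (by omega)] at this

theorem consistentFrom_pair_iff {s' : S} :
    M.ConsistentFrom A F s [s, s'] ↔ s' ∈ M.outA A s (F [s]) := by
  refine ⟨fun h => by simpa using h.2.2 0 (by simp), fun h => ⟨by simp, rfl, fun i hi => ?_⟩⟩
  obtain rfl : i = 0 := by simp at hi; omega
  simpa using h

theorem bConsistent_pair_iff {s' : S} :
    M.BConsistent A F b [s, s'] ↔ ∀ a ∈ A, ∀ ρ, M.consR s (F [s] a) ρ ≤ b a ρ := by
  refine ⟨fun h a ha ρ => by simpa [eAvail] using h a ha 0 (by simp) ρ, fun h a ha i hi ρ => ?_⟩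
  obtain rfl : i = 0 := by simp at hi; omega
  simpa [eAvail] using h a ha ρ

theorem singleton_mem_outSet_iff :
    [s] ∈ M.outSet A F b s ↔
      ¬ ((∀ a ∈ A, ∀ ρ, M.consR s (F [s] a) ρ ≤ b a ρ) ∧ (M.outA A s (F [s])).Nonempty) := by
  have hcons : M.ConsistentFrom A F s [s] := ⟨by simp, rfl, fun i hi => by simp at hi⟩
  have hbcons : M.BConsistent A F b [s] := fun a _ i hi => by simp at hi
  refine (and_iff_right hcons).trans <| (and_iff_right hbcons).trans <| not_congr ⟨?_, ?_⟩
  · rintro ⟨l', hpre, hlen, hl'cons, hl'bcons⟩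
    obtain ⟨t, rfl⟩ := hpre
    obtain ⟨s', t, rfl⟩ := List.exists_cons_of_length_pos (by simpa using hlen)
    have hpair : [s, s'] <+: [s] ++ s' :: t := ⟨t, rfl⟩
    exact ⟨bConsistent_pair_iff.1 (hl'bcons.of_prefix hpair),
      s', consistentFrom_pair_iff.1 (hl'cons.of_prefix hpair (by simp))⟩
  · rintro ⟨hcost, s', hs'⟩
    exact ⟨[s, s'], ⟨[s'], rfl⟩, by simp, consistentFrom_pair_iff.2 hs',
      bConsistent_pair_iff.2 hcost⟩

theorem exists_bMaximal_extension (hA : A.Nonempty) (hF : M.Strategy A F)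
    (hl : M.ConsistentFrom A F s l) (hbl : M.BConsistent A F b l) :
    ∃ l', l <+: l' ∧ M.BMaximal A F b s l' := by
  obtain ⟨a, ha⟩ := hA
  induction hn : b a M.res1 + 1 - l.length using Nat.strong_induction_on generalizing l with
  | _ n ih =>
  by_cases hext : ∃ l', l <+: l' ∧ l.length < l'.length ∧ M.ConsistentFrom A F s l' ∧
      M.BConsistent A F b l'
  · obtain ⟨l', hpre, hlen, hl'cons, hl'bcons⟩ := hext
    have := hl'bcons.length_le hF ha
    obtain ⟨l'', hpre', hmax⟩ := ih _ (by omega) hl'cons hl'bcons rfl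
    exact ⟨l'', hpre.trans hpre', hmax⟩
  · exact ⟨l, List.prefix_refl l, hl, hbl, hext⟩

end RBCGS

/-- One-step characterization of the Next modality (correctness of Pre). -/
theorem next_characterization {Agt S Act Res P : Type} [Inhabited S]
    (M : RBCGS Agt S Act Res) (V : P → S → Prop)
    (A : Set Agt) (hA : A.Nonempty) (b : Agt → Res → ℕ) (s : S)
    (φ : RBForm Agt Res P) :
    M.Sat V (.nxt A b φ) s ↔
      ∃ σA : Agt → Act, (∀ a ∈ A, σA a ∈ M.d s a) ∧
        (∀ a ∈ A, ∀ ρ : Res, M.consR s (σA a) ρ ≤ b a ρ) ∧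
        (M.outA A s σA).Nonempty ∧
        ∀ s' ∈ M.outA A s σA, M.Sat V φ s' := by
  constructor
  · rintro ⟨F, hF, hout⟩
    have hstep : (∀ a ∈ A, ∀ ρ, M.consR s (F [s] a) ρ ≤ b a ρ) ∧
        (M.outA A s (F [s])).Nonempty := by
      by_contra h
      simpa using (hout [s] (RBCGS.singleton_mem_outSet_iff.2 h)).1
    refine ⟨F [s], by simpa [RBCGS.JointAt] using hF [s] (by simp), hstep.1, hstep.2,
      fun s' hs' => ?_⟩
    obtain ⟨l, ⟨t, rfl⟩, hl⟩ := RBCGS.exists_bMaximal_extension hA hF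
      (RBCGS.consistentFrom_pair_iff.2 hs') (RBCGS.bConsistent_pair_iff.2 hstep.1)
    simpa using (hout _ hl).2
  · rintro ⟨σA, hσA, hcost, hne, hsat⟩
    obtain ⟨F, hF, hFs⟩ := RBCGS.exists_strategy_singleton hσA
    refine ⟨F, hF, fun l hl => ?_⟩
    obtain ⟨t, rfl⟩ := hl.1.exists_eq_cons
    cases t with
    | nil => exact absurd ⟨hFs ▸ hcost, hFs ▸ hne⟩ (RBCGS.singleton_mem_outSet_iff.1 hl)
    | cons s' t =>
      have hpair := hl.1.of_prefix (⟨t, rfl⟩ : [s, s'] <+: s :: s' :: t) (by simp)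
      exact ⟨by simp, hsat s' (hFs ▸ RBCGS.consistentFrom_pair_iff.1 hpair)⟩
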